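/- arXiv:2009.12185 — 7 statements merged into one kernel-verified Lean document; each statement's English description precedes it below -/
import Mathlib

section
/- Let G = (X, Y, u) be a continuous zero-sum game. Then the lower value max_{p∈Δ_X} min_{q∈Δ_Y} U(p,q) equals the upper value min_{q∈Δ_Y} max_{p∈Δ_X} U(p,q) (minimax theorem for continuous games on compact Euclidean strategy sets). -/
open Set MeasureTheory
set_option linter.unusedSectionVars false

lemma finite_alt {ι κ : Type*} [Fintype ι] [Nonempty ι] [Fintype κ] [Nonempty κ]
    (A : ι → κ → ℝ) (v : ℝ)
    (h : ∀ q ∈ stdSimplex ℝ κ, ∃ i, v ≤ ∑ j, A i j * q j) :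
    ∃ p ∈ stdSimplex ℝ ι, ∀ j, v ≤ ∑ i, p i * A i j := by
  classical
  set O : Set (ι → ℝ) := Set.pi Set.univ (fun _ => Iio v) with hO
  have hOmem : ∀ x : ι → ℝ, x ∈ O ↔ ∀ i, x i < v := by
    intro x; simp [hO, Set.mem_pi]
  let L : (κ → ℝ) →ₗ[ℝ] (ι → ℝ) :=
    { toFun := fun q i => ∑ j, A i j * q j
      map_add' := by
        intro q r; funext i
        simp [mul_add, Finset.sum_add_distrib]
      map_smul' := by
        intro c q; funext i
        simp [Finset.mul_sum, mul_comm, mul_left_comm] }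
  set C : Set (ι → ℝ) := L '' stdSimplex ℝ κ with hC
  have hOopen : IsOpen O := isOpen_set_pi Set.finite_univ (fun i _ => isOpen_Iio)
  have hOconv : Convex ℝ O := convex_pi (fun i _ => convex_Iio v)
  have hCconv : Convex ℝ C := (convex_stdSimplex ℝ κ).linear_image L
  have hdisj : Disjoint O C := by
    rw [Set.disjoint_left]
    rintro x hx ⟨q, hq, rfl⟩
    obtain ⟨i, hi⟩ := h q hq
    exact absurd hi (not_le.mpr ((hOmem _).mp hx i))
  obtain ⟨f, s, hfO, hfC⟩ := geometric_hahn_banach_open hOconv hOopen hCconv hdisj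
  set p' : ι → ℝ := fun i => f (Pi.single i 1) with hp'
  have hrep : ∀ x : ι → ℝ, f x = ∑ i, x i * p' i := by
    intro x
    have hx : x = ∑ i, x i • (Pi.single i (1 : ℝ) : ι → ℝ) := by
      funext j
      simp [Finset.sum_apply, Pi.single_apply]
    conv_lhs => rw [hx]
    rw [map_sum]
    simp [hp', smul_eq_mul]
  have hcO : (fun _ : ι => v - 1) ∈ O := (hOmem _).mpr (fun i => by norm_num)
  have hfc : f (fun _ : ι => v - 1) < s := hfO _ hcO
  have hnonneg : ∀ i, 0 ≤ p' i := by
    intro i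
    by_contra hneg
    push_neg at hneg
    set t : ℝ := (s - f (fun _ : ι => v - 1) + 1) / (-p' i) with ht
    have htpos : 0 ≤ t := by
      apply div_nonneg <;> [linarith; linarith]
    have hxO : ((fun _ : ι => v - 1) - t • (Pi.single i (1:ℝ) : ι → ℝ)) ∈ O := by
      rw [hOmem]
      intro k
      have : (0:ℝ) ≤ t * (Pi.single i (1:ℝ) : ι → ℝ) k := by
        apply mul_nonneg htpos
        by_cases hk : k = i <;> simp [Pi.single_apply, hk]
      simp only [Pi.sub_apply, Pi.smul_apply, smul_eq_mul]
      linarith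
    have := hfO _ hxO
    rw [map_sub, _root_.map_smul, smul_eq_mul] at this
    have hts : t * (-p' i) = s - f (fun _ : ι => v - 1) + 1 := by
      rw [ht, div_mul_cancel₀ _ (neg_ne_zero.mpr hneg.ne)]
    nlinarith
  obtain ⟨j₀⟩ := ‹Nonempty κ›
  have hbC : ∀ j : κ, (fun i => A i j) ∈ C := by
    intro j
    refine ⟨Pi.single j 1, single_mem_stdSimplex ℝ j, ?_⟩
    funext i
    simp [L, Pi.single_apply, Finset.sum_ite_eq', mul_comm]
  have hfb : s ≤ f (fun i => A i j₀) := hfC _ (hbC j₀)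
  have hsumpos : 0 < ∑ i, p' i := by
    apply Finset.sum_pos' (fun i _ => hnonneg i)
    by_contra hall
    push_neg at hall
    have hzero : ∀ i, p' i = 0 := fun i =>
      le_antisymm (by simpa using hall i (Finset.mem_univ i)) (hnonneg i)
    have h1 : f (fun _ : ι => v - 1) = 0 := by rw [hrep]; simp [hzero]
    have h2 : f (fun i => A i j₀) = 0 := by rw [hrep]; simp [hzero]
    linarith
  have hvs : v * (∑ i, p' i) ≤ s := by
    by_contra hlt
    push_neg at hlt
    set ε : ℝ := (v * (∑ i, p' i) - s) / (2 * ∑ i, p' i) with hε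
    have hεpos : 0 < ε := by
      apply div_pos <;> [linarith; linarith]
    have hmem : (fun _ : ι => v - ε) ∈ O := (hOmem _).mpr (fun i => by linarith)
    have := hfO _ hmem
    rw [hrep] at this
    have hsum : (∑ i, (v - ε) * p' i) = (v - ε) * ∑ i, p' i := by
      rw [Finset.mul_sum]
    rw [hsum] at this
    have hεs : ε * (∑ i, p' i) = (v * (∑ i, p' i) - s) / 2 := by
      rw [hε]; field_simp
    nlinarith
  refine ⟨fun i => p' i / ∑ k, p' k, ⟨fun i => div_nonneg (hnonneg i) hsumpos.le, ?_⟩, ?_⟩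
  · rw [← Finset.sum_div, div_self hsumpos.ne']
  · intro j
    have hsj : s ≤ ∑ i, A i j * p' i := by
      have := hfC _ (hbC j)
      rwa [hrep] at this
    have : ∑ i, (p' i / ∑ k, p' k) * A i j = (∑ i, A i j * p' i) / ∑ k, p' k := by
      rw [Finset.sum_div]
      exact Finset.sum_congr rfl (fun i _ => by ring)
    rw [this, le_div_iff₀ hsumpos]
    linarith

open MeasureTheory

lemma finite_game {ι κ : Type*} [Fintype ι] [Nonempty ι] [Fintype κ] [Nonempty κ]
    (A : ι → κ → ℝ) (δ : ℝ) (hδ : 0 < δ) :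
    ∃ (v : ℝ) (p : ι → ℝ) (q : κ → ℝ), p ∈ stdSimplex ℝ ι ∧ q ∈ stdSimplex ℝ κ ∧
      (∀ j, v ≤ ∑ i, p i * A i j) ∧ (∀ i, ∑ j, A i j * q j ≤ v + δ) := by
  classical
  obtain ⟨i₀⟩ := ‹Nonempty ι›
  obtain ⟨j₀⟩ := ‹Nonempty κ›
  set S : Set ℝ := {r | ∃ q ∈ stdSimplex ℝ κ, ∀ i, ∑ j, A i j * q j ≤ r} with hS
  have hSne : S.Nonempty := by
    refine ⟨Finset.univ.sup' Finset.univ_nonempty (fun i => A i j₀),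
      Pi.single j₀ 1, single_mem_stdSimplex ℝ j₀, fun i => ?_⟩
    have : ∑ j, A i j * (Pi.single j₀ 1 : κ → ℝ) j = A i j₀ := by
      simp [Pi.single_apply, Finset.sum_ite_eq', mul_comm]
    rw [this]
    exact Finset.le_sup' (fun i => A i j₀) (Finset.mem_univ i)
  have hSbdd : BddBelow S := by
    refine ⟨Finset.univ.inf' Finset.univ_nonempty (A i₀), ?_⟩
    rintro r ⟨q, ⟨hq0, hq1⟩, hqr⟩
    have h1 : Finset.univ.inf' Finset.univ_nonempty (A i₀) ≤ ∑ j, A i₀ j * q j := by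
      calc Finset.univ.inf' Finset.univ_nonempty (A i₀)
          = ∑ j, Finset.univ.inf' Finset.univ_nonempty (A i₀) * q j := by
            rw [← Finset.mul_sum, hq1, mul_one]
        _ ≤ ∑ j, A i₀ j * q j :=
            Finset.sum_le_sum (fun j _ => mul_le_mul_of_nonneg_right
              (Finset.inf'_le _ (Finset.mem_univ j)) (hq0 j))
    exact h1.trans (hqr i₀)
  set v : ℝ := sInf S with hv
  have halt : ∀ q ∈ stdSimplex ℝ κ, ∃ i, v ≤ ∑ j, A i j * q j := by
    intro q hq
    by_contra hno
    push_neg at hno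
    have hmem : Finset.univ.sup' Finset.univ_nonempty (fun i => ∑ j, A i j * q j) ∈ S :=
      ⟨q, hq, fun i => Finset.le_sup' (fun i => ∑ j, A i j * q j) (Finset.mem_univ i)⟩
    have hlt : Finset.univ.sup' Finset.univ_nonempty (fun i => ∑ j, A i j * q j) < v :=
      (Finset.sup'_lt_iff _).mpr (fun i _ => hno i)
    exact absurd (csInf_le hSbdd hmem) (not_le.mpr hlt)
  obtain ⟨p, hp, hpv⟩ := finite_alt A v halt
  have hlt : sInf S < v + δ := by rw [← hv]; linarith
  obtain ⟨r, ⟨q, hq, hqr⟩, hrlt⟩ := exists_lt_of_csInf_lt hSne hlt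
  exact ⟨v, p, q, hp, hq, hpv, fun i => (hqr i).trans hrlt.le⟩

section MeasureHelpers

variable {α : Type*} [MeasurableSpace α] [MeasurableSingletonClass α]

lemma integrable_dirac' {f : α → ℝ} (hf : StronglyMeasurable f) (a : α) :
    Integrable f (Measure.dirac a) := by
  refine ⟨hf.aestronglyMeasurable, ?_⟩
  rw [HasFiniteIntegral, lintegral_dirac]
  exact ENNReal.coe_lt_top

lemma discrete_prob {ι : Type*} [Fintype ι] {w : ι → ℝ} (hw : w ∈ stdSimplex ℝ ι)
    (x : ι → α) :
    IsProbabilityMeasure (∑ i, (ENNReal.ofReal (w i)) • Measure.dirac (x i)) := by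
  constructor
  rw [Measure.coe_finset_sum]
  simp only [Finset.sum_apply, Measure.smul_apply, Measure.dirac_apply_of_mem (Set.mem_univ _),
    smul_eq_mul, mul_one]
  rw [← ENNReal.ofReal_sum_of_nonneg (fun i _ => hw.1 i), hw.2]
  exact ENNReal.ofReal_one

lemma discrete_integral {ι : Type*} [Fintype ι] {w : ι → ℝ} (hw : w ∈ stdSimplex ℝ ι)
    (x : ι → α) {f : α → ℝ} (hf : StronglyMeasurable f) :
    ∫ z, f z ∂(∑ i, (ENNReal.ofReal (w i)) • Measure.dirac (x i)) = ∑ i, w i * f (x i) := by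
  rw [integral_finset_sum_measure (fun i _ =>
    (integrable_dirac' hf (x i)).smul_measure ENNReal.ofReal_ne_top)]
  refine Finset.sum_congr rfl (fun i _ => ?_)
  rw [integral_smul_measure, integral_dirac, ENNReal.toReal_ofReal (hw.1 i), smul_eq_mul]

end MeasureHelpers

/-- minimax theorem for continuous games: the lower value
`max_p min_q U(p,q)` equals the upper value `min_q max_p U(p,q)`. -/

theorem stmt_2 {m n : ℕ}
    (X : Set (EuclideanSpace ℝ (Fin m))) (Y : Set (EuclideanSpace ℝ (Fin n)))
    (hXne : X.Nonempty) (hXc : IsCompact X) (hYne : Y.Nonempty) (hYc : IsCompact Y)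
    (u : X × Y → ℝ) (hu : Continuous u) :
    (⨆ p : {p : Measure X // IsProbabilityMeasure p},
      ⨅ q : {q : Measure Y // IsProbabilityMeasure q}, ∫ z, u z ∂(p.1.prod q.1))
    =
    (⨅ q : {q : Measure Y // IsProbabilityMeasure q},
      ⨆ p : {p : Measure X // IsProbabilityMeasure p}, ∫ z, u z ∂(p.1.prod q.1)) := by
  classical
  haveI hXcs : CompactSpace X := isCompact_iff_compactSpace.mp hXc
  haveI hYcs : CompactSpace Y := isCompact_iff_compactSpace.mp hYc
  haveI hXn : Nonempty X := hXne.to_subtype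
  haveI hYn : Nonempty Y := hYne.to_subtype
  haveI : Nonempty {p : Measure X // IsProbabilityMeasure p} :=
    ⟨⟨Measure.dirac (Classical.arbitrary X), by infer_instance⟩⟩
  haveI : Nonempty {q : Measure Y // IsProbabilityMeasure q} :=
    ⟨⟨Measure.dirac (Classical.arbitrary Y), by infer_instance⟩⟩
  obtain ⟨B, hB⟩ : ∃ B, ∀ z : X × Y, ‖u z‖ ≤ B := by
    obtain ⟨B, hB⟩ := (isCompact_range hu.norm).bddAbove
    exact ⟨B, fun z => hB ⟨z, rfl⟩⟩
  set F : {p : Measure X // IsProbabilityMeasure p} →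
      {q : Measure Y // IsProbabilityMeasure q} → ℝ :=
    fun p q => ∫ z, u z ∂(p.1.prod q.1) with hF
  have hint : ∀ (p : {p : Measure X // IsProbabilityMeasure p})
      (q : {q : Measure Y // IsProbabilityMeasure q}), Integrable u (p.1.prod q.1) := by
    intro p q
    haveI := p.2; haveI := q.2
    exact hu.integrable_of_hasCompactSupport (HasCompactSupport.of_compactSpace u)
  have hFle : ∀ p q, |F p q| ≤ B := by
    intro p q
    haveI := p.2; haveI := q.2
    have h := norm_integral_le_of_norm_le_const (μ := p.1.prod q.1) (f := u) (C := B)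
      (Filter.Eventually.of_forall hB)
    simpa [measure_univ] using h
  have hbA : ∀ q, BddAbove (Set.range fun p => F p q) := fun q =>
    ⟨B, by rintro _ ⟨p, rfl⟩; exact (abs_le.mp (hFle p q)).2⟩
  have hbB : ∀ p, BddBelow (Set.range fun q => F p q) := fun p =>
    ⟨-B, by rintro _ ⟨q, rfl⟩; exact (abs_le.mp (hFle p q)).1⟩
  have hbInf : BddAbove (Set.range fun p => ⨅ q, F p q) := by
    refine ⟨B, ?_⟩
    rintro _ ⟨p, rfl⟩
    exact (ciInf_le (hbB p) (Classical.arbitrary _)).trans (abs_le.mp (hFle p _)).2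
  have hbSup : BddBelow (Set.range fun q => ⨆ p, F p q) := by
    refine ⟨-B, ?_⟩
    rintro _ ⟨q, rfl⟩
    exact le_trans (abs_le.mp (hFle (Classical.arbitrary _) q)).1
      (le_ciSup (hbA q) (Classical.arbitrary _))
  apply le_antisymm
  · exact ciSup_le fun p => le_ciInf fun q => (ciInf_le (hbB p) q).trans (le_ciSup (hbA q) p)
  · have key : ∀ ε > (0:ℝ), (⨅ q, ⨆ p, F p q) ≤ (⨆ p, ⨅ q, F p q) + ε := by
      intro ε hε
      set ε' : ℝ := ε / 3 with hε'def
      have hε'pos : 0 < ε' := by positivity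
      obtain ⟨δ, hδpos, hδ⟩ := Metric.uniformContinuous_iff.mp
        (CompactSpace.uniformContinuous_of_continuous hu) ε' hε'pos
      obtain ⟨tX, -, htXfin, htXcov⟩ :=
        finite_cover_balls_of_compact (isCompact_univ : IsCompact (Set.univ : Set X)) hδpos
      obtain ⟨tY, -, htYfin, htYcov⟩ :=
        finite_cover_balls_of_compact (isCompact_univ : IsCompact (Set.univ : Set Y)) hδpos
      set sX := htXfin.toFinset with hsX
      set sY := htYfin.toFinset with hsY
      have hmemX : ∀ x : X, ∃ c, ∃ hc : c ∈ sX, dist x c < δ := by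
        intro x
        have h := htXcov (Set.mem_univ x)
        simp only [Set.mem_iUnion] at h
        obtain ⟨c, hc, hx⟩ := h
        exact ⟨c, htXfin.mem_toFinset.mpr hc, Metric.mem_ball.mp hx⟩
      have hmemY : ∀ y : Y, ∃ c, ∃ hc : c ∈ sY, dist y c < δ := by
        intro y
        have h := htYcov (Set.mem_univ y)
        simp only [Set.mem_iUnion] at h
        obtain ⟨c, hc, hy⟩ := h
        exact ⟨c, htYfin.mem_toFinset.mpr hc, Metric.mem_ball.mp hy⟩
      obtain ⟨cx, hcx, -⟩ := hmemX (Classical.arbitrary X)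
      obtain ⟨cy, hcy, -⟩ := hmemY (Classical.arbitrary Y)
      haveI : Nonempty {a // a ∈ sX} := ⟨⟨cx, hcx⟩⟩
      haveI : Nonempty {b // b ∈ sY} := ⟨⟨cy, hcy⟩⟩
      set A : {a // a ∈ sX} → {b // b ∈ sY} → ℝ := fun i j => u (i.1, j.1) with hA
      obtain ⟨v, ph, qh, hph, hqh, hpv, hqv⟩ := finite_game A ε' hε'pos
      set Pm : Measure X := ∑ i, (ENNReal.ofReal (ph i)) • Measure.dirac ((i : {a // a ∈ sX}) : X)
        with hPm
      set Qm : Measure Y := ∑ j, (ENNReal.ofReal (qh j)) • Measure.dirac ((j : {b // b ∈ sY}) : Y)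
        with hQm
      haveI hPmprob : IsProbabilityMeasure Pm := discrete_prob hph _
      haveI hQmprob : IsProbabilityMeasure Qm := discrete_prob hqh _
      -- lower bound : the strategy Pm guarantees at least v - ε'
      have hPlow : ∀ q : {q : Measure Y // IsProbabilityMeasure q},
          v - ε' ≤ F ⟨Pm, hPmprob⟩ q := by
        intro q
        haveI := q.2
        have hrw : F ⟨Pm, hPmprob⟩ q = ∫ y, (∑ i, ph i * u ((i : {a // a ∈ sX}), y)) ∂q.1 := by
          show (∫ z, u z ∂(Pm.prod q.1)) = _
          rw [integral_prod_symm _ (hint ⟨Pm, hPmprob⟩ q)]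
          refine integral_congr_ae (Filter.Eventually.of_forall fun y => ?_)
          exact discrete_integral hph _
            ((hu.comp (continuous_id.prodMk continuous_const)).stronglyMeasurable)
        have hg : ∀ y : Y, v - ε' ≤ ∑ i, ph i * u ((i : {a // a ∈ sX}), y) := by
          intro y
          obtain ⟨c, hc, hdist⟩ := hmemY y
          set j : {b // b ∈ sY} := ⟨c, hc⟩ with hj
          have hub : ∀ i : {a // a ∈ sX}, A i j - ε' ≤ u ((i : {a // a ∈ sX}), y) := by
            intro i
            have hd : dist (((i : {a // a ∈ sX}) : X), y) (((i : {a // a ∈ sX}) : X), (j : Y)) < δ := by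
              rw [Prod.dist_eq]
              simp only [dist_self, max_lt_iff]
              exact ⟨hδpos, hdist⟩
            have h2 := hδ hd
            rw [Real.dist_eq] at h2
            have h3 := abs_lt.mp h2
            simp only [hA]
            linarith [h3.1]
          have hsum1 : ∑ i, ph i * (A i j - ε') = (∑ i, ph i * A i j) - ε' := by
            simp only [mul_sub]
            rw [Finset.sum_sub_distrib, ← Finset.sum_mul, hph.2, one_mul]
          have hsum2 : ∑ i, ph i * (A i j - ε') ≤ ∑ i, ph i * u ((i : {a // a ∈ sX}), y) :=
            Finset.sum_le_sum fun i _ => mul_le_mul_of_nonneg_left (hub i) (hph.1 i)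
          linarith [hpv j]
        have hgint : Integrable (fun y : Y => ∑ i, ph i * u ((i : {a // a ∈ sX}), y)) q.1 := by
          apply Continuous.integrable_of_hasCompactSupport
          · exact continuous_finset_sum _ fun i _ =>
              continuous_const.mul (hu.comp (continuous_const.prodMk continuous_id))
          · exact HasCompactSupport.of_compactSpace _
        rw [hrw]
        calc v - ε' = ∫ _, (v - ε') ∂q.1 := by simp [measure_univ]
          _ ≤ ∫ y, (∑ i, ph i * u ((i : {a // a ∈ sX}), y)) ∂q.1 :=
            integral_mono (integrable_const _) hgint hg
      -- upper bound : the strategy Qm guarantees at most v + 2ε'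
      have hQup : ∀ p : {p : Measure X // IsProbabilityMeasure p},
          F p ⟨Qm, hQmprob⟩ ≤ v + 2 * ε' := by
        intro p
        haveI := p.2
        have hrw : F p ⟨Qm, hQmprob⟩ = ∫ x, (∑ j, qh j * u (x, (j : {b // b ∈ sY}))) ∂p.1 := by
          show (∫ z, u z ∂(p.1.prod Qm)) = _
          rw [integral_prod _ (hint p ⟨Qm, hQmprob⟩)]
          refine integral_congr_ae (Filter.Eventually.of_forall fun x => ?_)
          exact discrete_integral hqh _
            ((hu.comp (continuous_const.prodMk continuous_id)).stronglyMeasurable)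
        have hg : ∀ x : X, ∑ j, qh j * u (x, (j : {b // b ∈ sY})) ≤ v + 2 * ε' := by
          intro x
          obtain ⟨c, hc, hdist⟩ := hmemX x
          set i : {a // a ∈ sX} := ⟨c, hc⟩ with hi
          have hub : ∀ j : {b // b ∈ sY}, u (x, (j : {b // b ∈ sY})) ≤ A i j + ε' := by
            intro j
            have hd : dist (x, ((j : {b // b ∈ sY}) : Y)) (((i : {a // a ∈ sX}) : X), (j : Y)) < δ := by
              rw [Prod.dist_eq]
              simp only [dist_self, max_lt_iff]
              exact ⟨hdist, hδpos⟩
            have h2 := hδ hd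
            rw [Real.dist_eq] at h2
            have h3 := abs_lt.mp h2
            simp only [hA]
            linarith [h3.2]
          have hsum1 : ∑ j, qh j * (A i j + ε') = (∑ j, A i j * qh j) + ε' := by
            simp only [mul_add]
            rw [Finset.sum_add_distrib, ← Finset.sum_mul, hqh.2, one_mul]
            congr 1
            exact Finset.sum_congr rfl fun j _ => mul_comm _ _
          have hsum2 : ∑ j, qh j * u (x, (j : {b // b ∈ sY})) ≤ ∑ j, qh j * (A i j + ε') :=
            Finset.sum_le_sum fun j _ => mul_le_mul_of_nonneg_left (hub j) (hqh.1 j)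
          linarith [hqv i]
        have hgint : Integrable (fun x : X => ∑ j, qh j * u (x, (j : {b // b ∈ sY}))) p.1 := by
          apply Continuous.integrable_of_hasCompactSupport
          · exact continuous_finset_sum _ fun j _ =>
              continuous_const.mul (hu.comp (continuous_id.prodMk continuous_const))
          · exact HasCompactSupport.of_compactSpace _
        rw [hrw]
        calc (∫ x, (∑ j, qh j * u (x, (j : {b // b ∈ sY}))) ∂p.1)
            ≤ ∫ _, (v + 2 * ε') ∂p.1 := integral_mono hgint (integrable_const _) hg
          _ = v + 2 * ε' := by simp [measure_univ]
      have h1 : v - ε' ≤ ⨆ p, ⨅ q, F p q :=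
        le_trans (le_ciInf hPlow) (le_ciSup hbInf ⟨Pm, hPmprob⟩)
      have h2 : (⨅ q, ⨆ p, F p q) ≤ v + 2 * ε' :=
        le_trans (ciInf_le hbSup ⟨Qm, hQmprob⟩) (ciSup_le hQup)
      have : ε' * 3 = ε := by rw [hε'def]; ring
      linarith
    exact le_of_forall_pos_le_add key
end

section
/- For every ε > 0, every continuous zero-sum game G = (X, Y, u) admits an ε-equilibrium (p*, q*) in which both p* and q* are finitely supported mixed strategies. -/
/-!
Discretize. By uniform continuity, `u` moves by less than `ε / 2` when either argument moves to a
point of a fine enough finite net. The finite matrix game on the two nets has a saddle point by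
von Neumann's minimax theorem (here from Sion's). Its mixed strategies, read as finitely supported
measures, guarantee each player the value of the finite game up to `ε / 2` against every pure
strategy of the opponent, hence, by Fubini, against every mixed one.
-/

open MeasureTheory Matrix

theorem Matrix.exists_stdSimplex_mulVec_le_vecMul {ι κ : Type*} [Fintype ι] [Fintype κ]
    [Nonempty ι] [Nonempty κ] (A : Matrix ι κ ℝ) :
    ∃ p ∈ stdSimplex ℝ ι, ∃ q ∈ stdSimplex ℝ κ, ∀ i j, (A *ᵥ q) i ≤ (p ᵥ* A) j := by
  classical
  obtain ⟨q, hq, p, hp, hsaddle⟩ := Sion.exists_isSaddlePointOn (f := fun q p => p ⬝ᵥ A *ᵥ q)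
    ⟨_, single_mem_stdSimplex ℝ (Classical.arbitrary κ)⟩ (convex_stdSimplex ℝ κ)
    (isCompact_stdSimplex ℝ κ)
    (fun p _ => (by fun_prop : Continuous fun q => p ⬝ᵥ A *ᵥ q)
      |>.lowerSemicontinuous.lowerSemicontinuousOn _)
    (fun p _ => ((dotProductBilin ℝ ℝ p).comp A.mulVecLin).convexOn
      (convex_stdSimplex ℝ κ) |>.quasiconvexOn)
    (convex_stdSimplex ℝ ι) ⟨_, single_mem_stdSimplex ℝ (Classical.arbitrary ι)⟩
    (isCompact_stdSimplex ℝ ι)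
    (fun q _ => (by fun_prop : Continuous fun p => p ⬝ᵥ A *ᵥ q)
      |>.upperSemicontinuous.upperSemicontinuousOn _)
    (fun q _ => ((dotProductBilin ℝ ℝ).flip (A *ᵥ q)).concaveOn
      (convex_stdSimplex ℝ ι) |>.quasiconcaveOn)
  refine ⟨p, hp, q, hq, fun i j => ?_⟩
  have h := hsaddle _ (single_mem_stdSimplex ℝ j) _ (single_mem_stdSimplex ℝ i)
  simp only [single_dotProduct, one_mul, mulVec_single_one] at h
  exact h

theorem exists_finset_forall_exists_dist_lt {α : Type*} [PseudoMetricSpace α] [CompactSpace α]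
    {δ : ℝ} (hδ : 0 < δ) : ∃ s : Finset α, ∀ x, ∃ y ∈ s, dist x y < δ := by
  obtain ⟨t, -, ht, hcover⟩ := (isCompact_univ (X := α)).finite_cover_balls hδ
  refine ⟨ht.toFinset, fun x => ?_⟩
  obtain ⟨y, hy, hxy⟩ := Set.mem_iUnion₂.mp (hcover (Set.mem_univ x))
  exact ⟨y, ht.mem_toFinset.mpr hy, hxy⟩

section Integral

variable {α β : Type*} [MeasurableSpace α] [MeasurableSpace β]

theorem Continuous.integrable_of_compactSpace [TopologicalSpace α] [CompactSpace α] [T2Space α]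
    [OpensMeasurableSpace α] {μ : Measure α} [IsFiniteMeasure μ] {f : α → ℝ}
    (hf : Continuous f) : Integrable f μ :=
  hf.integrable_of_hasCompactSupport (HasCompactSupport.of_compactSpace f)

theorem integral_le_integral_add_of_le_add {μ : Measure α} [IsProbabilityMeasure μ]
    {f g : α → ℝ} {c : ℝ} (hf : Integrable f μ) (hg : Integrable g μ)
    (hfg : ∀ x, f x ≤ g x + c) : ∫ x, f x ∂μ ≤ ∫ x, g x ∂μ + c :=
  calc ∫ x, f x ∂μ ≤ ∫ x, (g x + c) ∂μ := integral_mono hf (hg.add (integrable_const c)) hfg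
    _ = ∫ x, g x ∂μ + c := by simp [integral_add hg (integrable_const c)]

theorem integral_le_integral_add_of_forall_le_add {μ : Measure α} {ν : Measure β}
    [IsProbabilityMeasure μ] [IsProbabilityMeasure ν] {f : α → ℝ} {g : β → ℝ} {c : ℝ}
    (hf : Integrable f μ) (hg : Integrable g ν) (hfg : ∀ x y, f x ≤ g y + c) :
    ∫ x, f x ∂μ ≤ ∫ y, g y ∂ν + c := by
  have hle : ∀ y, ∫ x, f x ∂μ - c ≤ g y := fun y => by
    have := integral_mono hf (integrable_const (g y + c)) fun x => hfg x y
    simp only [integral_const, probReal_univ, one_smul] at this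
    linarith
  have := integral_mono (integrable_const _) hg hle
  simp only [integral_const, probReal_univ, one_smul] at this
  linarith

theorem integral_prod_le_integral_prod_add {μ π : Measure α} {ν ρ : Measure β}
    [IsProbabilityMeasure μ] [IsProbabilityMeasure π] [IsProbabilityMeasure ν]
    [IsProbabilityMeasure ρ] {u : α × β → ℝ} {c : ℝ} (hπν : Integrable u (π.prod ν))
    (hμρ : Integrable u (μ.prod ρ))
    (hu : ∀ x y, ∫ y', u (x, y') ∂ν ≤ ∫ x', u (x', y) ∂μ + c) :
    ∫ z, u z ∂(π.prod ν) ≤ ∫ z, u z ∂(μ.prod ρ) + c := by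
  rw [integral_prod u hπν, integral_prod_symm u hμρ]
  exact integral_le_integral_add_of_forall_le_add hπν.integral_prod_left
    hμρ.integral_prod_right hu

end Integral

section WeightedDiracSum

variable {ι α : Type*} [Fintype ι] [MeasurableSpace α]

noncomputable def weightedDiracSum (w : ι → ℝ) (f : ι → α) : Measure α :=
  ∑ i, ENNReal.ofReal (w i) • Measure.dirac (f i)

theorem isProbabilityMeasure_weightedDiracSum {w : ι → ℝ} (hw : w ∈ stdSimplex ℝ ι)
    (f : ι → α) : IsProbabilityMeasure (weightedDiracSum w f) := by
  constructor
  simp only [weightedDiracSum, Measure.finsetSum_apply, Measure.smul_apply,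
    Measure.dirac_apply_of_mem (Set.mem_univ _), smul_eq_mul, mul_one]
  rw [← ENNReal.ofReal_sum_of_nonneg fun i _ => hw.1 i, hw.2, ENNReal.ofReal_one]

theorem weightedDiracSum_compl_range [MeasurableSingletonClass α] (w : ι → ℝ) (f : ι → α) :
    weightedDiracSum w f (Set.range f)ᶜ = 0 := by
  simp [weightedDiracSum, Measure.finsetSum_apply, Measure.dirac_apply]

theorem integral_weightedDiracSum [MeasurableSingletonClass α] {w : ι → ℝ} (hw : ∀ i, 0 ≤ w i)
    (f : ι → α) (g : α → ℝ) : ∫ x, g x ∂weightedDiracSum w f = ∑ i, w i * g (f i) := by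
  have hint : ∀ i ∈ Finset.univ, Integrable g (ENNReal.ofReal (w i) • Measure.dirac (f i)) :=
    fun i _ => ((integrable_const (g (f i))).congr (ae_eq_dirac g).symm).smul_measure
      ENNReal.ofReal_ne_top
  rw [weightedDiracSum, integral_finsetSum_measure hint]
  refine Finset.sum_congr rfl fun i _ => ?_
  rw [integral_smul_measure, integral_dirac, smul_eq_mul, ENNReal.toReal_ofReal (hw i)]

end WeightedDiracSum

theorem exists_weightedDiracSum_forall_integral_le_integral_add {α β : Type*} [MetricSpace α]
    [CompactSpace α] [Nonempty α] [MeasurableSpace α] [BorelSpace α] [MetricSpace β]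
    [CompactSpace β] [Nonempty β] [MeasurableSpace β] [BorelSpace β]
    {u : α × β → ℝ} (hu : Continuous u) {ε : ℝ} (hε : 0 < ε) :
    ∃ (s : Finset α) (t : Finset β) (p : s → ℝ) (q : t → ℝ), p ∈ stdSimplex ℝ s ∧
      q ∈ stdSimplex ℝ t ∧ ∀ x y, ∫ y', u (x, y') ∂weightedDiracSum q Subtype.val ≤
        ∫ x', u (x', y) ∂weightedDiracSum p Subtype.val + ε := by
  obtain ⟨δ, hδ, hclose⟩ := Metric.uniformContinuous_iff.mp
    (CompactSpace.uniformContinuous_of_continuous hu) (ε / 2) (half_pos hε)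
  have hle : ∀ {z z'}, dist z z' < δ → u z ≤ u z' + ε / 2 := fun hzz' => by
    have := hclose hzz'
    rw [Real.dist_eq, abs_sub_lt_iff] at this
    linarith
  obtain ⟨s, hs⟩ := exists_finset_forall_exists_dist_lt (α := α) hδ
  obtain ⟨t, ht⟩ := exists_finset_forall_exists_dist_lt (α := β) hδ
  choose rs hrs hdist_rs using hs
  choose rt hrt hdist_rt using ht
  have : Nonempty s := ⟨⟨_, hrs (Classical.arbitrary α)⟩⟩
  have : Nonempty t := ⟨⟨_, hrt (Classical.arbitrary β)⟩⟩
  obtain ⟨p, hp, q, hq, hpq⟩ :=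
    Matrix.exists_stdSimplex_mulVec_le_vecMul (Matrix.of fun (a : s) (b : t) => u (a, b))
  have := isProbabilityMeasure_weightedDiracSum hp Subtype.val
  have := isProbabilityMeasure_weightedDiracSum hq Subtype.val
  refine ⟨s, t, p, q, hp, hq, fun x y => ?_⟩
  calc ∫ y', u (x, y') ∂weightedDiracSum q Subtype.val
      ≤ ∫ y', u (rs x, y') ∂weightedDiracSum q Subtype.val + ε / 2 :=
        integral_le_integral_add_of_le_add
          (Continuous.integrable_of_compactSpace (by fun_prop))
          (Continuous.integrable_of_compactSpace (by fun_prop)) fun y' =>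
          hle (by simpa [Prod.dist_eq] using hdist_rs x)
    _ ≤ ∫ x', u (x', rt y) ∂weightedDiracSum p Subtype.val + ε / 2 := by
        gcongr
        simpa [integral_weightedDiracSum hp.1, integral_weightedDiracSum hq.1, Matrix.mulVec,
          dotProduct, Matrix.vecMul, mul_comm] using hpq ⟨_, hrs x⟩ ⟨_, hrt y⟩
    _ ≤ ∫ x', u (x', y) ∂weightedDiracSum p Subtype.val + ε / 2 + ε / 2 := by
        gcongr
        exact integral_le_integral_add_of_le_add
          (Continuous.integrable_of_compactSpace (by fun_prop))
          (Continuous.integrable_of_compactSpace (by fun_prop)) fun x' =>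
          hle (by simpa [Prod.dist_eq, dist_comm] using hdist_rt y)
    _ = _ := by ring

/-- every continuous zero-sum game admits, for every ε > 0, an
ε-equilibrium in finitely supported mixed strategies. -/
theorem stmt_4 {m n : ℕ}
    (X : Set (EuclideanSpace ℝ (Fin m))) (Y : Set (EuclideanSpace ℝ (Fin n)))
    (hXne : X.Nonempty) (hXc : IsCompact X) (hYne : Y.Nonempty) (hYc : IsCompact Y)
    (u : X × Y → ℝ) (hu : Continuous u)
    (ε : ℝ) (hε : 0 < ε) :
    ∃ (ps : Measure X) (qs : Measure Y), IsProbabilityMeasure ps ∧ IsProbabilityMeasure qs ∧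
      -- finitely supported
      (∃ s : Finset X, ps ((↑s : Set X)ᶜ) = 0) ∧
      (∃ t : Finset Y, qs ((↑t : Set Y)ᶜ) = 0) ∧
      -- ε-equilibrium
      (∀ (p : Measure X) [IsProbabilityMeasure p],
        ∫ z, u z ∂(p.prod qs) - ε ≤ ∫ z, u z ∂(ps.prod qs)) ∧
      (∀ (q : Measure Y) [IsProbabilityMeasure q],
        ∫ z, u z ∂(ps.prod qs) ≤ ∫ z, u z ∂(ps.prod q) + ε) := by
  have : CompactSpace X := isCompact_iff_compactSpace.mp hXc
  have : CompactSpace Y := isCompact_iff_compactSpace.mp hYc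
  have : Nonempty X := hXne.to_subtype
  have : Nonempty Y := hYne.to_subtype
  obtain ⟨s, t, p, q, hp, hq, hpq⟩ :=
    exists_weightedDiracSum_forall_integral_le_integral_add hu hε
  set μ := weightedDiracSum p Subtype.val
  set ν := weightedDiracSum q Subtype.val
  have : IsProbabilityMeasure μ := isProbabilityMeasure_weightedDiracSum hp Subtype.val
  have : IsProbabilityMeasure ν := isProbabilityMeasure_weightedDiracSum hq Subtype.val
  have hint : ∀ (μ : Measure X) (ν : Measure Y) [IsFiniteMeasure μ] [IsFiniteMeasure ν],
      Integrable u (μ.prod ν) := fun _ _ _ _ => hu.integrable_of_compactSpace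
  refine ⟨μ, ν, inferInstance, inferInstance, ⟨s, ?_⟩, ⟨t, ?_⟩, fun π _ => ?_, fun ρ _ => ?_⟩
  · simpa using weightedDiracSum_compl_range p Subtype.val
  · simpa using weightedDiracSum_compl_range q Subtype.val
  · linarith [integral_prod_le_integral_prod_add (hint π ν) (hint μ ν) hpq]
  · linarith [integral_prod_le_integral_prod_add (hint μ ν) (hint μ ρ) hpq]
end

section
/- In the double oracle algorithm, suppose at step i: (p_i*, q_i*) is an equilibrium of the finite subgame (X_i, Y_i, u), x_{i+1} ∈ X maximizes U(·, q_i*) over X, and y_{i+1} ∈ Y minimizes U(p_i*, ·) over Y. If x_{i+1} ∈ X_i and y_{i+1} ∈ Y_i, then U(p_i*, y_{i+1}) = U(x_{i+1}, q_i*) = U(p_i*, q_i*). -/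
open MeasureTheory

/-- Lemma 3: if both best responses already lie in the current finite
subgame, then `U(p_i*, y_{i+1}) = U(x_{i+1}, q_i*) = U(p_i*, q_i*)`. -/
theorem stmt_5 {m n : ℕ}
    (X : Set (EuclideanSpace ℝ (Fin m))) (Y : Set (EuclideanSpace ℝ (Fin n)))
    (hXne : X.Nonempty) (hXc : IsCompact X) (hYne : Y.Nonempty) (hYc : IsCompact Y)
    (u : X × Y → ℝ) (hu : Continuous u)
    (Xi : Finset X) (Yi : Finset Y) (hXi : Xi.Nonempty) (hYi : Yi.Nonempty)
    (ps : Measure X) (qs : Measure Y)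
    [IsProbabilityMeasure ps] [IsProbabilityMeasure qs]
    -- (ps, qs) is supported on the subgame (Xi, Yi)
    (hps : ps ((↑Xi : Set X)ᶜ) = 0) (hqs : qs ((↑Yi : Set Y)ᶜ) = 0)
    -- and is an equilibrium of the subgame
    (heq₁ : ∀ x ∈ Xi, ∫ z, u z ∂((Measure.dirac x).prod qs) ≤ ∫ z, u z ∂(ps.prod qs))
    (heq₂ : ∀ y ∈ Yi, ∫ z, u z ∂(ps.prod qs) ≤ ∫ z, u z ∂(ps.prod (Measure.dirac y)))
    -- x1 maximizes U(·, qs) over X, y1 minimizes U(ps, ·) over Y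
    (x1 : X) (hx1 : ∀ x : X,
      ∫ z, u z ∂((Measure.dirac x).prod qs) ≤ ∫ z, u z ∂((Measure.dirac x1).prod qs))
    (y1 : Y) (hy1 : ∀ y : Y,
      ∫ z, u z ∂(ps.prod (Measure.dirac y1)) ≤ ∫ z, u z ∂(ps.prod (Measure.dirac y)))
    (hx1mem : x1 ∈ Xi) (hy1mem : y1 ∈ Yi) :
    ∫ z, u z ∂(ps.prod (Measure.dirac y1)) = ∫ z, u z ∂((Measure.dirac x1).prod qs) ∧
    ∫ z, u z ∂((Measure.dirac x1).prod qs) = ∫ z, u z ∂(ps.prod qs) := by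
  haveI : CompactSpace X := isCompact_iff_compactSpace.mp hXc
  haveI : CompactSpace Y := isCompact_iff_compactSpace.mp hYc
  have hint : ∀ (μ : Measure X) (ν : Measure Y) [IsFiniteMeasure μ] [IsFiniteMeasure ν],
      Integrable u (μ.prod ν) := fun μ ν _ _ =>
    hu.integrable_of_hasCompactSupport (HasCompactSupport.of_compactSpace u)
  set g : X → ℝ := fun x => ∫ y, u (x, y) ∂qs with hg
  set h : Y → ℝ := fun y => ∫ x, u (x, y) ∂ps with hh
  have hgm : ∀ x, Measurable (fun y => u (x, y)) := fun x =>
    (hu.comp (Continuous.prodMk_right x)).measurable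
  have hA : ∀ x : X, ∫ z, u z ∂((Measure.dirac x).prod qs) = g x := by
    intro x
    rw [integral_prod _ (hint _ _)]
    exact integral_dirac' _ _ (StronglyMeasurable.integral_prod_right' hu.stronglyMeasurable)
  have hB : ∀ y : Y, ∫ z, u z ∂(ps.prod (Measure.dirac y)) = h y := by
    intro y
    rw [integral_prod _ (hint _ _)]
    congr 1
    ext x
    exact integral_dirac' _ _ (hgm x).stronglyMeasurable
  have hC : ∫ z, u z ∂(ps.prod qs) = ∫ x, g x ∂ps := integral_prod _ (hint _ _)
  have hC' : ∫ z, u z ∂(ps.prod qs) = ∫ y, h y ∂qs := integral_prod_symm _ (hint _ _)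
  have hgi : Integrable g ps := (hint ps qs).integral_prod_left
  have hhi : Integrable h qs := (hint ps qs).integral_prod_right
  -- U(ps,qs) ≤ U(x1,qs)
  have h2 : ∫ z, u z ∂(ps.prod qs) ≤ ∫ z, u z ∂((Measure.dirac x1).prod qs) := by
    rw [hC, hA]
    calc ∫ x, g x ∂ps ≤ ∫ _, g x1 ∂ps := by
          refine integral_mono hgi (integrable_const _) fun x => ?_
          have := hx1 x; rwa [hA, hA] at this
      _ = g x1 := by simp
  -- U(ps,y1) ≤ U(ps,qs)
  have h4 : ∫ z, u z ∂(ps.prod (Measure.dirac y1)) ≤ ∫ z, u z ∂(ps.prod qs) := by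
    rw [hC', hB]
    calc h y1 = ∫ _, h y1 ∂qs := by simp
      _ ≤ ∫ y, h y ∂qs := by
          refine integral_mono (integrable_const _) hhi fun y => ?_
          have := hy1 y; rwa [hB, hB] at this
  have e1 : ∫ z, u z ∂((Measure.dirac x1).prod qs) = ∫ z, u z ∂(ps.prod qs) :=
    le_antisymm (heq₁ x1 hx1mem) h2
  have e2 : ∫ z, u z ∂(ps.prod (Measure.dirac y1)) = ∫ z, u z ∂(ps.prod qs) :=
    le_antisymm h4 (heq₂ y1 hy1mem)
  exact ⟨e2.trans e1.symm, e1⟩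
end

section
/- In the double oracle algorithm, at every step i the bracketing inequality holds: U(p_i*, y_{i+1}) ≤ v(G) ≤ U(x_{i+1}, q_i*), where v(G) is the value of the full game, (p_i*, q_i*) is an equilibrium of the subgame (X_i, Y_i, u), x_{i+1} is a best response in X to q_i*, and y_{i+1} is a best response in Y to p_i*. -/
open MeasureTheory

/-- Lemma 4: the double oracle bounds bracket the value of the game:
`U(p_i*, y_{i+1}) ≤ v(G) ≤ U(x_{i+1}, q_i*)`. -/
theorem stmt_6 {m n : ℕ}
    (X : Set (EuclideanSpace ℝ (Fin m))) (Y : Set (EuclideanSpace ℝ (Fin n)))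
    (hXne : X.Nonempty) (hXc : IsCompact X) (hYne : Y.Nonempty) (hYc : IsCompact Y)
    (u : X × Y → ℝ) (hu : Continuous u)
    -- (ph, qh) is an equilibrium of the full game, so v(G) = ∫ u d(ph × qh)
    (ph : Measure X) (qh : Measure Y)
    [IsProbabilityMeasure ph] [IsProbabilityMeasure qh]
    (heq₁ : ∀ (p : Measure X) [IsProbabilityMeasure p],
      ∫ z, u z ∂(p.prod qh) ≤ ∫ z, u z ∂(ph.prod qh))
    (heq₂ : ∀ (q : Measure Y) [IsProbabilityMeasure q],
      ∫ z, u z ∂(ph.prod qh) ≤ ∫ z, u z ∂(ph.prod q))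
    -- subgame equilibrium (ps, qs) on finite nonempty (Xi, Yi)
    (Xi : Finset X) (Yi : Finset Y) (hXi : Xi.Nonempty) (hYi : Yi.Nonempty)
    (ps : Measure X) (qs : Measure Y)
    [IsProbabilityMeasure ps] [IsProbabilityMeasure qs]
    (hps : ps ((↑Xi : Set X)ᶜ) = 0) (hqs : qs ((↑Yi : Set Y)ᶜ) = 0)
    (hsub₁ : ∀ x ∈ Xi, ∫ z, u z ∂((Measure.dirac x).prod qs) ≤ ∫ z, u z ∂(ps.prod qs))
    (hsub₂ : ∀ y ∈ Yi, ∫ z, u z ∂(ps.prod qs) ≤ ∫ z, u z ∂(ps.prod (Measure.dirac y)))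
    -- best responses over the full strategy sets
    (x1 : X) (hx1 : ∀ x : X,
      ∫ z, u z ∂((Measure.dirac x).prod qs) ≤ ∫ z, u z ∂((Measure.dirac x1).prod qs))
    (y1 : Y) (hy1 : ∀ y : Y,
      ∫ z, u z ∂(ps.prod (Measure.dirac y1)) ≤ ∫ z, u z ∂(ps.prod (Measure.dirac y))) :
    ∫ z, u z ∂(ps.prod (Measure.dirac y1)) ≤ ∫ z, u z ∂(ph.prod qh) ∧
    ∫ z, u z ∂(ph.prod qh) ≤ ∫ z, u z ∂((Measure.dirac x1).prod qs) := by
  haveI : CompactSpace X := isCompact_iff_compactSpace.mp hXc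
  haveI : CompactSpace Y := isCompact_iff_compactSpace.mp hYc
  haveI : Nonempty X := hXne.to_subtype
  haveI : Nonempty Y := hYne.to_subtype
  obtain ⟨z0, hC⟩ := hu.norm.exists_forall_ge (by simp [Filter.cocompact_eq_bot])
  have hint : ∀ (μ : Measure X) (ν : Measure Y) [IsProbabilityMeasure μ]
      [IsProbabilityMeasure ν], Integrable u (μ.prod ν) := by
    intro μ ν _ _
    exact (integrable_const ‖u z0‖).mono' hu.aestronglyMeasurable
      (Filter.Eventually.of_forall fun z => hC z)
  have hdir : ∀ (y : Y), ∫ z, u z ∂(ps.prod (Measure.dirac y)) = ∫ x, u (x, y) ∂ps := by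
    intro y
    rw [integral_prod _ (hint ps (Measure.dirac y))]
    simp [integral_dirac]
  have hdir' : ∀ (x : X), ∫ z, u z ∂((Measure.dirac x).prod qs) = ∫ y, u (x, y) ∂qs := by
    intro x
    rw [integral_prod_symm _ (hint (Measure.dirac x) qs)]
    simp [integral_dirac]
  constructor
  · calc ∫ z, u z ∂(ps.prod (Measure.dirac y1))
        ≤ ∫ z, u z ∂(ps.prod qh) := by
          rw [integral_prod_symm _ (hint ps qh)]
          have : ∫ z, u z ∂(ps.prod (Measure.dirac y1))
              = ∫ (_ : Y), (∫ z, u z ∂(ps.prod (Measure.dirac y1))) ∂qh := by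
            simp
          rw [this]
          refine integral_mono (integrable_const _) (hint ps qh).integral_prod_right ?_
          exact fun y => (hy1 y).trans (hdir y).le
      _ ≤ ∫ z, u z ∂(ph.prod qh) := heq₁ ps
  · calc ∫ z, u z ∂(ph.prod qh)
        ≤ ∫ z, u z ∂(ph.prod qs) := heq₂ qs
      _ ≤ ∫ z, u z ∂((Measure.dirac x1).prod qs) := by
          rw [integral_prod _ (hint ph qs)]
          have : ∫ z, u z ∂((Measure.dirac x1).prod qs)
              = ∫ (_ : X), (∫ z, u z ∂((Measure.dirac x1).prod qs)) ∂ph := by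
            simp
          rw [this]
          refine integral_mono (hint ph qs).integral_prod_left (integrable_const _) ?_
          exact fun x => (hdir' x).ge.trans (hx1 x)
end

section
/- Let (p_i*, q_i*) be an equilibrium of a subgame (X', Y', u) of a continuous zero-sum game G = (X, Y, u), let x' ∈ X maximize U(·, q_i*) over X, and y' ∈ Y minimize U(p_i*, ·) over Y. If U(x', q_i*) − U(p_i*, y') ≤ ε, then (p_i*, q_i*) is an ε-equilibrium of the full game G. -/
open MeasureTheory

/-- if the duality gap `U(x', q*) − U(p*, y') ≤ ε` between the best responses
to a subgame equilibrium, then that subgame equilibrium is an ε-equilibrium of the full game. -/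
theorem stmt_8 {m n : ℕ}
    (X : Set (EuclideanSpace ℝ (Fin m))) (Y : Set (EuclideanSpace ℝ (Fin n)))
    (hXne : X.Nonempty) (hXc : IsCompact X) (hYne : Y.Nonempty) (hYc : IsCompact Y)
    (u : X × Y → ℝ) (hu : Continuous u)
    -- subgame (X', Y', u) and its equilibrium (ps, qs)
    (X' : Set X) (Y' : Set Y) (hX'ne : X'.Nonempty) (hX'c : IsCompact X')
    (hY'ne : Y'.Nonempty) (hY'c : IsCompact Y')
    (ps : Measure X) (qs : Measure Y)
    [IsProbabilityMeasure ps] [IsProbabilityMeasure qs]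
    (hps : ps (X'ᶜ) = 0) (hqs : qs (Y'ᶜ) = 0)
    (hsub₁ : ∀ x ∈ X', ∫ z, u z ∂((Measure.dirac x).prod qs) ≤ ∫ z, u z ∂(ps.prod qs))
    (hsub₂ : ∀ y ∈ Y', ∫ z, u z ∂(ps.prod qs) ≤ ∫ z, u z ∂(ps.prod (Measure.dirac y)))
    -- best responses over the full strategy sets
    (x' : X) (hx' : ∀ x : X,
      ∫ z, u z ∂((Measure.dirac x).prod qs) ≤ ∫ z, u z ∂((Measure.dirac x').prod qs))
    (y' : Y) (hy' : ∀ y : Y,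
      ∫ z, u z ∂(ps.prod (Measure.dirac y')) ≤ ∫ z, u z ∂(ps.prod (Measure.dirac y)))
    (ε : ℝ)
    (hgap : (∫ z, u z ∂((Measure.dirac x').prod qs)) - ∫ z, u z ∂(ps.prod (Measure.dirac y')) ≤ ε) :
    (∀ (p : Measure X) [IsProbabilityMeasure p],
      ∫ z, u z ∂(p.prod qs) - ε ≤ ∫ z, u z ∂(ps.prod qs)) ∧
    (∀ (q : Measure Y) [IsProbabilityMeasure q],
      ∫ z, u z ∂(ps.prod qs) ≤ ∫ z, u z ∂(ps.prod q) + ε) := by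
  have hXcs : CompactSpace X := isCompact_iff_compactSpace.mp hXc
  have hYcs : CompactSpace Y := isCompact_iff_compactSpace.mp hYc
  have hcsupp : HasCompactSupport u :=
    IsCompact.of_isClosed_subset isCompact_univ (isClosed_tsupport u) (Set.subset_univ _)
  -- integrability of u w.r.t. any product of finite measures
  have hint : ∀ (p : Measure X) (q : Measure Y), IsFiniteMeasure p → IsFiniteMeasure q →
      Integrable u (p.prod q) := by
    intro p q hp hq
    exact hu.integrable_of_hasCompactSupport hcsupp
  set f : X → ℝ := fun x => ∫ y, u (x, y) ∂qs with hf
  set g : Y → ℝ := fun y => ∫ x, u (x, y) ∂ps with hg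
  -- left marginal formula
  have hL : ∀ (p : Measure X) [IsProbabilityMeasure p],
      ∫ z, u z ∂(p.prod qs) = ∫ x, f x ∂p := by
    intro p _
    exact MeasureTheory.integral_prod u (hint p qs inferInstance inferInstance)
  have hR : ∀ (q : Measure Y) [IsProbabilityMeasure q],
      ∫ z, u z ∂(ps.prod q) = ∫ y, g y ∂q := by
    intro q _
    exact MeasureTheory.integral_prod_symm u (hint ps q inferInstance inferInstance)
  have hfx : ∀ x : X, ∫ z, u z ∂((Measure.dirac x).prod qs) = f x := by
    intro x
    rw [hL (Measure.dirac x)]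
    exact integral_dirac f x
  have hgy : ∀ y : Y, ∫ z, u z ∂(ps.prod (Measure.dirac y)) = g y := by
    intro y
    rw [hR (Measure.dirac y)]
    exact integral_dirac g y
  -- pointwise bounds
  have hfb : ∀ x : X, f x ≤ f x' := by
    intro x; have := hx' x; rwa [hfx x, hfx x'] at this
  have hgb : ∀ y : Y, g y' ≤ g y := by
    intro y; have := hy' y; rwa [hgy y, hgy y'] at this
  have hgap' : f x' - g y' ≤ ε := by rwa [hfx x', hgy y'] at hgap
  constructor
  · intro p _
    have h1 : ∫ z, u z ∂(p.prod qs) ≤ f x' := by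
      rw [hL p]
      calc ∫ x, f x ∂p ≤ ∫ _x, f x' ∂p := by
            refine integral_mono ?_ (integrable_const _) hfb
            exact (hint p qs inferInstance inferInstance).integral_prod_left
        _ = f x' := by simp
    have h2 : g y' ≤ ∫ z, u z ∂(ps.prod qs) := by
      rw [hR qs]
      calc g y' = ∫ _y, g y' ∂qs := by simp
        _ ≤ ∫ y, g y ∂qs := by
            refine integral_mono (integrable_const _) ?_ hgb
            exact (hint ps qs inferInstance inferInstance).integral_prod_right
    linarith
  · intro q _
    have h1 : ∫ z, u z ∂(ps.prod qs) ≤ f x' := by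
      rw [hL ps]
      calc ∫ x, f x ∂ps ≤ ∫ _x, f x' ∂ps := by
            refine integral_mono ?_ (integrable_const _) hfb
            exact (hint ps qs inferInstance inferInstance).integral_prod_left
        _ = f x' := by simp
    have h2 : g y' ≤ ∫ z, u z ∂(ps.prod q) := by
      rw [hR q]
      calc g y' = ∫ _y, g y' ∂q := by simp
        _ ≤ ∫ y, g y ∂q := by
            refine integral_mono (integrable_const _) ?_ hgb
            exact (hint ps q inferInstance inferInstance).integral_prod_right
    linarith
end

section
/- Let G = (X, Y, u) be a finite zero-sum game with X and Y finite. The double oracle algorithm with ε = 0 (solve subgame equilibrium, add one best response per player each iteration, stop when the duality gap is zero) terminates in finitely many iterations, and its output (p_i*, q_i*) is an exact equilibrium of G. -/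
/-!
Since the strategy sets are finite, the growing subgames must eventually stall: at some step `i`
both best responses `x_{i+1}`, `y_{i+1}` already lie in the subgame. The subgame equilibrium
conditions then give `U(x_{i+1}, q_i) ≤ U(p_i, q_i) ≤ U(p_i, y_{i+1})`, while, as best responses
in the whole game, `x_{i+1}` and `y_{i+1}` dominate every mixed deviation (a mixed payoff is an
average of pure ones). Hence both inequalities are equalities, the duality gap vanishes, and
`(p_i, q_i)` is an equilibrium of the full game.
-/

open MeasureTheory

theorem Monotone.exists_apply_succ_eq {α : Type*} [PartialOrder α] [Finite α] {f : ℕ → α}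
    (hf : Monotone f) : ∃ n, f (n + 1) = f n := by
  obtain ⟨n, hn⟩ := WellFoundedGT.monotone_chain_condition ⟨f, hf⟩
  exact ⟨n, (hn (n + 1) n.le_succ).symm⟩

theorem exists_mem_of_eq_insert_succ {α β : Type*} [Finite α] [Finite β]
    {S : ℕ → Set α} {T : ℕ → Set β} {a : ℕ → α} {b : ℕ → β}
    (hS : ∀ n, S (n + 1) = insert (a n) (S n)) (hT : ∀ n, T (n + 1) = insert (b n) (T n)) :
    ∃ n, a n ∈ S n ∧ b n ∈ T n := by
  have hmono : Monotone fun n ↦ (S n, T n) := monotone_nat_of_le_succ fun n ↦ by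
    simp only [hS, hT, Prod.mk_le_mk, Set.subset_insert, and_self]
  obtain ⟨n, hn⟩ := hmono.exists_apply_succ_eq
  simp only [Prod.mk.injEq, hS, hT, Set.insert_eq_self] at hn
  exact ⟨n, hn⟩

section FiniteGame

variable {α β : Type*} [MeasurableSpace α] [MeasurableSingletonClass α] [Finite α]
  [MeasurableSpace β] [MeasurableSingletonClass β] [Finite β]

theorem integral_le_of_forall_le_of_finite (μ : Measure α) [IsProbabilityMeasure μ]
    {f : α → ℝ} {c : ℝ} (hf : ∀ x, f x ≤ c) : ∫ x, f x ∂μ ≤ c := by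
  simpa using integral_mono (μ := μ) Integrable.of_finite (integrable_const c) hf

theorem le_integral_of_forall_le_of_finite (μ : Measure α) [IsProbabilityMeasure μ]
    {f : α → ℝ} {c : ℝ} (hf : ∀ x, c ≤ f x) : c ≤ ∫ x, f x ∂μ := by
  simpa using integral_mono (μ := μ) (integrable_const c) Integrable.of_finite hf

variable {u : α × β → ℝ}

theorem integral_prod_eq_integral_integral_dirac_prod (p : Measure α) (q : Measure β)
    [IsFiniteMeasure p] [IsFiniteMeasure q] :
    ∫ z, u z ∂(p.prod q) = ∫ x, (∫ z, u z ∂((Measure.dirac x).prod q)) ∂p := by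
  simp only [integral_prod u Integrable.of_finite, integral_dirac]

theorem integral_prod_eq_integral_integral_prod_dirac (p : Measure α) (q : Measure β)
    [IsFiniteMeasure p] [IsFiniteMeasure q] :
    ∫ z, u z ∂(p.prod q) = ∫ y, (∫ z, u z ∂(p.prod (Measure.dirac y))) ∂q := by
  rw [integral_prod_symm u Integrable.of_finite]
  simp only [integral_prod u Integrable.of_finite, integral_dirac]

theorem integral_prod_le_of_forall_integral_dirac_prod_le {q : Measure β} [IsFiniteMeasure q]
    {x₀ : α}
    (hx₀ : ∀ x, ∫ z, u z ∂((Measure.dirac x).prod q) ≤ ∫ z, u z ∂((Measure.dirac x₀).prod q))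
    (p : Measure α) [IsProbabilityMeasure p] :
    ∫ z, u z ∂(p.prod q) ≤ ∫ z, u z ∂((Measure.dirac x₀).prod q) := by
  rw [integral_prod_eq_integral_integral_dirac_prod p q]
  exact integral_le_of_forall_le_of_finite p hx₀

theorem le_integral_prod_of_forall_le_integral_prod_dirac {p : Measure α} [IsFiniteMeasure p]
    {y₀ : β}
    (hy₀ : ∀ y, ∫ z, u z ∂(p.prod (Measure.dirac y₀)) ≤ ∫ z, u z ∂(p.prod (Measure.dirac y)))
    (q : Measure β) [IsProbabilityMeasure q] :
    ∫ z, u z ∂(p.prod (Measure.dirac y₀)) ≤ ∫ z, u z ∂(p.prod q) := by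
  rw [integral_prod_eq_integral_integral_prod_dirac p q]
  exact le_integral_of_forall_le_of_finite q hy₀

end FiniteGame

theorem stmt_9_general {m n : ℕ}
    (X : Set (EuclideanSpace ℝ (Fin m))) (Y : Set (EuclideanSpace ℝ (Fin n)))
    (hXfin : X.Finite) (hYfin : Y.Finite)
    (u : X × Y → ℝ)
    -- iterates of the double oracle algorithm
    (Xi : ℕ → Finset X) (Yi : ℕ → Finset Y)
    (ps : ℕ → Measure X) (qs : ℕ → Measure Y)
    (hpsprob : ∀ i, IsProbabilityMeasure (ps i)) (hqsprob : ∀ i, IsProbabilityMeasure (qs i))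
    -- (ps i, qs i) is an equilibrium of the subgame (Xi i, Yi i, u)
    (hsub₁ : ∀ i, ∀ x ∈ Xi i,
      ∫ z, u z ∂((Measure.dirac x).prod (qs i)) ≤ ∫ z, u z ∂((ps i).prod (qs i)))
    (hsub₂ : ∀ i, ∀ y ∈ Yi i,
      ∫ z, u z ∂((ps i).prod (qs i)) ≤ ∫ z, u z ∂((ps i).prod (Measure.dirac y)))
    -- best responses over the full strategy sets
    (xseq : ℕ → X) (yseq : ℕ → Y)
    (hx : ∀ i, ∀ x : X,
      ∫ z, u z ∂((Measure.dirac x).prod (qs i)) ≤ ∫ z, u z ∂((Measure.dirac (xseq i)).prod (qs i)))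
    (hy : ∀ i, ∀ y : Y,
      ∫ z, u z ∂((ps i).prod (Measure.dirac (yseq i))) ≤ ∫ z, u z ∂((ps i).prod (Measure.dirac y)))
    -- subgames grow by adding the best responses
    (hXrec : ∀ i, (↑(Xi (i + 1)) : Set X) = insert (xseq i) ↑(Xi i))
    (hYrec : ∀ i, (↑(Yi (i + 1)) : Set Y) = insert (yseq i) ↑(Yi i)) :
    ∃ i,
      -- the duality gap is zero, i.e. the algorithm terminates at step i with ε = 0
      (∫ z, u z ∂((Measure.dirac (xseq i)).prod (qs i)))
        - (∫ z, u z ∂((ps i).prod (Measure.dirac (yseq i)))) = 0 ∧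
      -- and (ps i, qs i) is an exact equilibrium of G
      (∀ (p : Measure X) [IsProbabilityMeasure p],
        ∫ z, u z ∂(p.prod (qs i)) ≤ ∫ z, u z ∂((ps i).prod (qs i))) ∧
      (∀ (q : Measure Y) [IsProbabilityMeasure q],
        ∫ z, u z ∂((ps i).prod (qs i)) ≤ ∫ z, u z ∂((ps i).prod q)) := by
  have := hXfin.to_subtype
  have := hYfin.to_subtype
  obtain ⟨i, hxi, hyi⟩ := exists_mem_of_eq_insert_succ (S := fun i ↦ (Xi i : Set X))
    (T := fun i ↦ (Yi i : Set Y)) hXrec hYrec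
  have hrow := integral_prod_le_of_forall_integral_dirac_prod_le (hx i)
  have hcol := le_integral_prod_of_forall_le_integral_prod_dirac (hy i)
  have hxV := hsub₁ i (xseq i) hxi
  have hVy := hsub₂ i (yseq i) hyi
  refine ⟨i, ?_, fun p _ ↦ (hrow p).trans hxV, fun q _ ↦ hVy.trans (hcol q)⟩
  rw [le_antisymm hxV (hrow (ps i)), le_antisymm (hcol (qs i)) hVy, sub_self]

/-- for a finite game and ε = 0, the double oracle algorithm reaches, in
finitely many iterations, a step with zero duality gap whose subgame equilibrium is an
exact equilibrium of the full game. -/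
theorem stmt_9 {m n : ℕ}
    (X : Set (EuclideanSpace ℝ (Fin m))) (Y : Set (EuclideanSpace ℝ (Fin n)))
    (hXne : X.Nonempty) (hXfin : X.Finite) (hYne : Y.Nonempty) (hYfin : Y.Finite)
    (u : X × Y → ℝ)
    -- iterates of the double oracle algorithm
    (Xi : ℕ → Finset X) (Yi : ℕ → Finset Y)
    (hXi : ∀ i, (Xi i).Nonempty) (hYi : ∀ i, (Yi i).Nonempty)
    (ps : ℕ → Measure X) (qs : ℕ → Measure Y)
    (hpsprob : ∀ i, IsProbabilityMeasure (ps i)) (hqsprob : ∀ i, IsProbabilityMeasure (qs i))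
    (hpssupp : ∀ i, ps i ((↑(Xi i) : Set X)ᶜ) = 0)
    (hqssupp : ∀ i, qs i ((↑(Yi i) : Set Y)ᶜ) = 0)
    -- (ps i, qs i) is an equilibrium of the subgame (Xi i, Yi i, u)
    (hsub₁ : ∀ i, ∀ x ∈ Xi i,
      ∫ z, u z ∂((Measure.dirac x).prod (qs i)) ≤ ∫ z, u z ∂((ps i).prod (qs i)))
    (hsub₂ : ∀ i, ∀ y ∈ Yi i,
      ∫ z, u z ∂((ps i).prod (qs i)) ≤ ∫ z, u z ∂((ps i).prod (Measure.dirac y)))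
    -- best responses over the full strategy sets
    (xseq : ℕ → X) (yseq : ℕ → Y)
    (hx : ∀ i, ∀ x : X,
      ∫ z, u z ∂((Measure.dirac x).prod (qs i)) ≤ ∫ z, u z ∂((Measure.dirac (xseq i)).prod (qs i)))
    (hy : ∀ i, ∀ y : Y,
      ∫ z, u z ∂((ps i).prod (Measure.dirac (yseq i))) ≤ ∫ z, u z ∂((ps i).prod (Measure.dirac y)))
    -- subgames grow by adding the best responses
    (hXrec : ∀ i, (↑(Xi (i + 1)) : Set X) = insert (xseq i) ↑(Xi i))
    (hYrec : ∀ i, (↑(Yi (i + 1)) : Set Y) = insert (yseq i) ↑(Yi i)) :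
    ∃ i,
      -- the duality gap is zero, i.e. the algorithm terminates at step i with ε = 0
      (∫ z, u z ∂((Measure.dirac (xseq i)).prod (qs i)))
        - (∫ z, u z ∂((ps i).prod (Measure.dirac (yseq i)))) = 0 ∧
      -- and (ps i, qs i) is an exact equilibrium of G
      (∀ (p : Measure X) [IsProbabilityMeasure p],
        ∫ z, u z ∂(p.prod (qs i)) ≤ ∫ z, u z ∂((ps i).prod (qs i))) ∧
      (∀ (q : Measure Y) [IsProbabilityMeasure q],
        ∫ z, u z ∂((ps i).prod (qs i)) ≤ ∫ z, u z ∂((ps i).prod q)) :=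
  stmt_9_general X Y hXfin hYfin u Xi Yi ps qs hpsprob hqsprob hsub₁ hsub₂ xseq yseq hx hy hXrec
    hYrec
end

section
/- Let G = (X, Y, u) be a continuous zero-sum game, and let (p_i*, q_i*, x_{i+1}, y_{i+1}) be an infinite sequence of iterates of the double oracle algorithm. Suppose along a subsequence p_i* ⇒ p* and q_i* ⇒ q* weakly. Then (p*, q*) is an equilibrium of G, i.e., U(x, q*) ≤ U(p*, q*) ≤ U(p*, y) for all x ∈ X, y ∈ Y. -/
open MeasureTheory Filter Topology

/-! Mixed strategies are points of the spaces of probability measures with the topology of weak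
convergence, where the payoff `(p, q) ↦ ∫ u d(p × q)` and the embedding `x ↦ δ_x` are continuous.
Pass to a further subsequence along which the best responses `x_{φ k}` converge to some `b`.
Since `x_{φ k}` is a pure strategy of the restricted game at every later stage, in particular at
`φ (k + 1)`, the equilibrium there gives `U(x_{φ k}, q_{φ(k+1)}) ≤ U(p_{φ(k+1)}, q_{φ(k+1)})`, which
becomes `U(b, q*) ≤ U(p*, q*)` in the limit; optimality of the best responses gives
`U(x, q*) ≤ U(b, q*)`. The minimizer's side is the same argument for `-u` with the roles swapped. -/

lemma mem_of_lt_of_succ_eq_insert {ι : Type*} {A : ℕ → Set ι} {a : ℕ → ι}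
    (hA : ∀ i, A (i + 1) = insert (a i) (A i)) {i j : ℕ} (hij : i < j) : a i ∈ A j := by
  have hmono : Monotone A :=
    monotone_nat_of_le_succ fun k => (hA k).symm ▸ Set.subset_insert _ _
  exact hmono hij (by rw [hA]; exact Set.mem_insert _ _)

theorem le_of_tendsto_of_bestResponse {α P Q : Type*} [TopologicalSpace α] [SeqCompactSpace α]
    [TopologicalSpace P] [TopologicalSpace Q]
    (U : P → Q → ℝ) (hU : Continuous (Function.uncurry U)) (D : α → P) (hD : Continuous D)
    (A : ℕ → Set α) (p : ℕ → P) (q : ℕ → Q) (a : ℕ → α)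
    (hpA : ∀ i, ∀ x ∈ A i, U (D x) (q i) ≤ U (p i) (q i))
    (ha : ∀ i x, U (D x) (q i) ≤ U (D (a i)) (q i))
    (hA : ∀ i, A (i + 1) = insert (a i) (A i))
    {φ : ℕ → ℕ} (hφ : StrictMono φ) {p₀ : P} {q₀ : Q}
    (hp : Tendsto (p ∘ φ) atTop (𝓝 p₀)) (hq : Tendsto (q ∘ φ) atTop (𝓝 q₀)) (x : α) :
    U (D x) q₀ ≤ U p₀ q₀ := by
  obtain ⟨b, ψ, hψ, hb⟩ := SeqCompactSpace.tendsto_subseq (a ∘ φ)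
  have hU_tendsto {s : ℕ → P} {t : ℕ → Q} {s₀ : P} {t₀ : Q} (hs : Tendsto s atTop (𝓝 s₀))
      (ht : Tendsto t atTop (𝓝 t₀)) :
      Tendsto (fun k => U (s k) (t k)) atTop (𝓝 (U s₀ t₀)) :=
    hU.continuousAt.tendsto.comp (hs.prodMk_nhds ht)
  have hψ' : Tendsto ψ atTop atTop := hψ.tendsto_atTop
  have hψ_succ : Tendsto (fun k => ψ (k + 1)) atTop atTop :=
    hψ'.comp (tendsto_add_atTop_nat 1)
  have hDb : Tendsto (fun k => D (a (φ (ψ k)))) atTop (𝓝 (D b)) := (hD.tendsto b).comp hb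
  have h_best : U (D x) q₀ ≤ U (D b) q₀ :=
    le_of_tendsto_of_tendsto' (hU_tendsto tendsto_const_nhds (hq.comp hψ'))
      (hU_tendsto hDb (hq.comp hψ')) fun k => ha _ x
  have h_later : U (D b) q₀ ≤ U p₀ q₀ :=
    le_of_tendsto_of_tendsto' (hU_tendsto hDb (hq.comp hψ_succ))
      (hU_tendsto (hp.comp hψ_succ) (hq.comp hψ_succ)) fun k =>
        hpA _ _ (mem_of_lt_of_succ_eq_insert hA (hφ (hψ k.lt_succ_self)))
  exact h_best.trans h_later

namespace MeasureTheory.ProbabilityMeasure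

lemma tendsto_of_forall_continuous_integral_tendsto {α γ : Type*}
    [MeasurableSpace α] [TopologicalSpace α] [OpensMeasurableSpace α] {F : Filter γ}
    {μs : γ → ProbabilityMeasure α} {μ : ProbabilityMeasure α}
    (h : ∀ f : α → ℝ, Continuous f →
      Tendsto (fun i => ∫ x, f x ∂(μs i : Measure α)) F (𝓝 (∫ x, f x ∂(μ : Measure α)))) :
    Tendsto μs F (𝓝 μ) :=
  tendsto_iff_forall_integral_tendsto.2 fun f => h f f.continuous

lemma continuous_integral_prod {α β : Type*} [TopologicalSpace α] [CompactSpace α]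
    [SecondCountableTopology α] [TopologicalSpace.PseudoMetrizableSpace α] [MeasurableSpace α]
    [OpensMeasurableSpace α] [TopologicalSpace β] [CompactSpace β] [SecondCountableTopology β]
    [TopologicalSpace.PseudoMetrizableSpace β] [MeasurableSpace β] [OpensMeasurableSpace β]
    {u : α × β → ℝ} (hu : Continuous u) :
    Continuous fun pq : ProbabilityMeasure α × ProbabilityMeasure β =>
      ∫ z, u z ∂(pq.1.prod pq.2 : Measure (α × β)) :=
  (continuous_integral_continuousMap (⟨u, hu⟩ : C(α × β, ℝ))).comp continuous_prod

end MeasureTheory.ProbabilityMeasure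

theorem stmt_10_general {m n : ℕ}
    (X : Set (EuclideanSpace ℝ (Fin m))) (Y : Set (EuclideanSpace ℝ (Fin n)))
    (hXc : IsCompact X) (hYc : IsCompact Y)
    (u : X × Y → ℝ) (hu : Continuous u)
    -- iterates of the double oracle algorithm
    (Xi : ℕ → Finset X) (Yi : ℕ → Finset Y)
    (ps : ℕ → Measure X) (qs : ℕ → Measure Y)
    (hpsprob : ∀ i, IsProbabilityMeasure (ps i)) (hqsprob : ∀ i, IsProbabilityMeasure (qs i))
    (hsub₁ : ∀ i, ∀ x ∈ Xi i,
      ∫ z, u z ∂((Measure.dirac x).prod (qs i)) ≤ ∫ z, u z ∂((ps i).prod (qs i)))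
    (hsub₂ : ∀ i, ∀ y ∈ Yi i,
      ∫ z, u z ∂((ps i).prod (qs i)) ≤ ∫ z, u z ∂((ps i).prod (Measure.dirac y)))
    (xseq : ℕ → X) (yseq : ℕ → Y)
    (hx : ∀ i, ∀ x : X,
      ∫ z, u z ∂((Measure.dirac x).prod (qs i)) ≤ ∫ z, u z ∂((Measure.dirac (xseq i)).prod (qs i)))
    (hy : ∀ i, ∀ y : Y,
      ∫ z, u z ∂((ps i).prod (Measure.dirac (yseq i))) ≤ ∫ z, u z ∂((ps i).prod (Measure.dirac y)))
    (hXrec : ∀ i, (↑(Xi (i + 1)) : Set X) = insert (xseq i) ↑(Xi i))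
    (hYrec : ∀ i, (↑(Yi (i + 1)) : Set Y) = insert (yseq i) ↑(Yi i))
    -- a subsequence along which (ps, qs) converges weakly to (pstar, qstar)
    (φ : ℕ → ℕ) (hφ : StrictMono φ)
    (pstar : Measure X) (qstar : Measure Y)
    [IsProbabilityMeasure pstar] [IsProbabilityMeasure qstar]
    (hpconv : ∀ f : X → ℝ, Continuous f →
      Tendsto (fun i => ∫ x, f x ∂(ps (φ i))) atTop (𝓝 (∫ x, f x ∂pstar)))
    (hqconv : ∀ g : Y → ℝ, Continuous g →
      Tendsto (fun i => ∫ y, g y ∂(qs (φ i))) atTop (𝓝 (∫ y, g y ∂qstar))) :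
    -- (pstar, qstar) is an equilibrium of G
    (∀ x : X, ∫ z, u z ∂((Measure.dirac x).prod qstar) ≤ ∫ z, u z ∂(pstar.prod qstar)) ∧
    (∀ y : Y, ∫ z, u z ∂(pstar.prod qstar) ≤ ∫ z, u z ∂(pstar.prod (Measure.dirac y))) := by
  have : CompactSpace X := isCompact_iff_compactSpace.mp hXc
  have : CompactSpace Y := isCompact_iff_compactSpace.mp hYc
  let U : ProbabilityMeasure X → ProbabilityMeasure Y → ℝ := fun p q =>
    ∫ z, u z ∂(p.prod q : Measure (X × Y))
  have hU : Continuous (Function.uncurry U) := ProbabilityMeasure.continuous_integral_prod hu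
  have hp := ProbabilityMeasure.tendsto_of_forall_continuous_integral_tendsto
    (μs := fun i => ⟨ps (φ i), hpsprob (φ i)⟩) (μ := ⟨pstar, inferInstance⟩) hpconv
  have hq := ProbabilityMeasure.tendsto_of_forall_continuous_integral_tendsto
    (μs := fun i => ⟨qs (φ i), hqsprob (φ i)⟩) (μ := ⟨qstar, inferInstance⟩) hqconv
  -- `hsub₁`, `hx`, ... are already statements about `U`, up to unfolding `diracProba`.
  refine ⟨le_of_tendsto_of_bestResponse U hU diracProba continuous_diracProba
    (fun i => Xi i) (fun i => ⟨ps i, hpsprob i⟩) (fun i => ⟨qs i, hqsprob i⟩) xseq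
    hsub₁ hx hXrec hφ hp hq, fun y => ?_⟩
  have h_min := le_of_tendsto_of_bestResponse (fun q p => -U p q)
    (hU.comp continuous_swap).neg diracProba continuous_diracProba
    (fun i => Yi i) (fun i => ⟨qs i, hqsprob i⟩) (fun i => ⟨ps i, hpsprob i⟩) yseq
    (fun i y hy => neg_le_neg (hsub₂ i y hy)) (fun i y => neg_le_neg (hy i y)) hYrec hφ hq hp y
  exact neg_le_neg_iff.mp h_min

/-- any weak limit of a subsequence of double oracle iterates is an
equilibrium of the full game. -/
theorem stmt_10 {m n : ℕ}
    (X : Set (EuclideanSpace ℝ (Fin m))) (Y : Set (EuclideanSpace ℝ (Fin n)))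
    (hXne : X.Nonempty) (hXc : IsCompact X) (hYne : Y.Nonempty) (hYc : IsCompact Y)
    (u : X × Y → ℝ) (hu : Continuous u)
    -- iterates of the double oracle algorithm
    (Xi : ℕ → Finset X) (Yi : ℕ → Finset Y)
    (hXi : ∀ i, (Xi i).Nonempty) (hYi : ∀ i, (Yi i).Nonempty)
    (ps : ℕ → Measure X) (qs : ℕ → Measure Y)
    (hpsprob : ∀ i, IsProbabilityMeasure (ps i)) (hqsprob : ∀ i, IsProbabilityMeasure (qs i))
    (hpssupp : ∀ i, ps i ((↑(Xi i) : Set X)ᶜ) = 0)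
    (hqssupp : ∀ i, qs i ((↑(Yi i) : Set Y)ᶜ) = 0)
    (hsub₁ : ∀ i, ∀ x ∈ Xi i,
      ∫ z, u z ∂((Measure.dirac x).prod (qs i)) ≤ ∫ z, u z ∂((ps i).prod (qs i)))
    (hsub₂ : ∀ i, ∀ y ∈ Yi i,
      ∫ z, u z ∂((ps i).prod (qs i)) ≤ ∫ z, u z ∂((ps i).prod (Measure.dirac y)))
    (xseq : ℕ → X) (yseq : ℕ → Y)
    (hx : ∀ i, ∀ x : X,
      ∫ z, u z ∂((Measure.dirac x).prod (qs i)) ≤ ∫ z, u z ∂((Measure.dirac (xseq i)).prod (qs i)))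
    (hy : ∀ i, ∀ y : Y,
      ∫ z, u z ∂((ps i).prod (Measure.dirac (yseq i))) ≤ ∫ z, u z ∂((ps i).prod (Measure.dirac y)))
    (hXrec : ∀ i, (↑(Xi (i + 1)) : Set X) = insert (xseq i) ↑(Xi i))
    (hYrec : ∀ i, (↑(Yi (i + 1)) : Set Y) = insert (yseq i) ↑(Yi i))
    -- a subsequence along which (ps, qs) converges weakly to (pstar, qstar)
    (φ : ℕ → ℕ) (hφ : StrictMono φ)
    (pstar : Measure X) (qstar : Measure Y)
    [IsProbabilityMeasure pstar] [IsProbabilityMeasure qstar]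
    (hpconv : ∀ f : X → ℝ, Continuous f →
      Tendsto (fun i => ∫ x, f x ∂(ps (φ i))) atTop (𝓝 (∫ x, f x ∂pstar)))
    (hqconv : ∀ g : Y → ℝ, Continuous g →
      Tendsto (fun i => ∫ y, g y ∂(qs (φ i))) atTop (𝓝 (∫ y, g y ∂qstar))) :
    -- (pstar, qstar) is an equilibrium of G
    (∀ x : X, ∫ z, u z ∂((Measure.dirac x).prod qstar) ≤ ∫ z, u z ∂(pstar.prod qstar)) ∧
    (∀ y : Y, ∫ z, u z ∂(pstar.prod qstar) ≤ ∫ z, u z ∂(pstar.prod (Measure.dirac y))) :=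
  stmt_10_general X Y hXc hYc u hu Xi Yi ps qs hpsprob hqsprob hsub₁ hsub₂ xseq yseq hx hy hXrec
    hYrec φ hφ pstar qstar hpconv hqconv
end
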